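/- Let W be a finite-dimensional real vector space and (T_n) a sequence of random affine maps on W whose linear parts satisfy ‖Lin(T_n)‖ → 0 in probability. Then for any two probability measures ν₁, ν₂ on W and any compactly supported continuous f : W → ℝ, the difference ∫ f(T_n t) dν₁(t) − ∫ f(T_n t) dν₂(t) converges to 0 in L¹ (with respect to the underlying probability space). -/

import Mathlib

set_option linter.unusedSectionVars false
set_option linter.unusedVariables false

open MeasureTheory Filter Topology Metric ProbabilityTheory Classical

noncomputable section

variable (V : Type*) [NormedAddCommGroup V] [NormedSpace ℝ V] [FiniteDimensional ℝ V]

/-- The general linear group of `V`, realized as units of continuous linear endomorphisms. -/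
abbrev GLV := (V →L[ℝ] V)ˣ

variable {V}

lemma gl_injective (g : GLV V) : Function.Injective fun v : V => g.val v := by
  intro x y h
  have h2 : (↑g⁻¹ : V →L[ℝ] V) (g.val x) = (↑g⁻¹ : V →L[ℝ] V) (g.val y) := congrArg _ h
  rwa [← ContinuousLinearMap.mul_apply, ← ContinuousLinearMap.mul_apply, Units.inv_mul,
    ContinuousLinearMap.one_apply, ContinuousLinearMap.one_apply] at h2

/-- The action of `GL(V)` on the projective space `P(V)`. -/
def act (g : GLV V) (x : Projectivization ℝ V) : Projectivization ℝ V :=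
  Projectivization.map ((g.val : V →L[ℝ] V) : V →ₗ[ℝ] V) (fun _ _ h => gl_injective g h) x

instance : TopologicalSpace (Projectivization ℝ V) := instTopologicalSpaceQuotient
instance : MeasurableSpace (Projectivization ℝ V) := borel _
instance : MeasurableSpace (GLV V) := borel _

/-- The projectivization `[W] ⊆ P(V)` of a subspace `W ≤ V`. -/
def projSet (W : Submodule ℝ V) : Set (Projectivization ℝ V) := {x | x.rep ∈ W}

/-- Convolution of measures on `GL(V)`. -/
def mconv (μ₁ μ₂ : Measure (GLV V)) : Measure (GLV V) := (μ₁.prod μ₂).map fun p => p.1 * p.2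

/-- Convolution powers `μ^{*n}` of a measure on `GL(V)` (with `μ^{*0} = δ_id`). -/
def convPow (μ : Measure (GLV V)) : ℕ → Measure (GLV V)
  | 0 => Measure.dirac 1
  | n+1 => mconv μ (convPow μ n)

/-- Convolution `μ ∗ ν` of a measure `μ` on `GL(V)` with a measure `ν` on `P(V)`. -/
def conv (μ : Measure (GLV V)) (ν : Measure (Projectivization ℝ V)) :
    Measure (Projectivization ℝ V) :=
  (μ.prod ν).map fun p => act p.1 p.2

/-- `ν` is `μ`-stationary: `μ ∗ ν = ν`. -/
def IsStationaryGL (μ : Measure (GLV V)) (ν : Measure (Projectivization ℝ V)) : Prop :=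
  conv μ ν = ν

/-- The cocycle average `α(ν) = ∬ log (‖g v‖/‖v‖) dμ(g) dν([v])`. -/
def cocycleAvg (μ : Measure (GLV V)) (ν : Measure (Projectivization ℝ V)) : ℝ :=
  ∫ g, ∫ x, Real.log (‖g.val x.rep‖ / ‖x.rep‖) ∂ν ∂μ

/-- `ν` is `μ`-stationary and ergodic (extremal among stationary probability measures). -/
def IsErgodicStationary (μ : Measure (GLV V)) (ν : Measure (Projectivization ℝ V)) : Prop :=
  IsStationaryGL μ ν ∧ ∀ ν₁ ν₂ : Measure (Projectivization ℝ V), IsProbabilityMeasure ν₁ →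
    IsProbabilityMeasure ν₂ → IsStationaryGL μ ν₁ → IsStationaryGL μ ν₂ → ∀ t : ℝ, 0 < t → t < 1 →
      ν = ENNReal.ofReal t • ν₁ + ENNReal.ofReal (1 - t) • ν₂ → ν₁ = ν

/-- The left random-walk word `L_n = ω_{n-1} ⋯ ω_0`. -/
def word (ω : ℕ → GLV V) : ℕ → GLV V
  | 0 => 1
  | n+1 => ω n * word ω n

/-- The norm of the restriction of `g` to the subspace `W` (the `A`-block of `g`). -/
def opNormOn (W : Submodule ℝ V) (g : GLV V) : ℝ :=
  sSup ((fun w : V => ‖g.val w‖) '' {w | w ∈ W ∧ ‖w‖ ≤ 1})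

/-- `μ` has a finite first moment: `∫ log N(g) dμ(g) < ∞`, `N(g) = max (‖g‖, ‖g⁻¹‖)`. -/
def FirstMoment (μ : Measure (GLV V)) : Prop :=
  Integrable (fun g : GLV V =>
    Real.log (max ‖(g.val : V →L[ℝ] V)‖ ‖((g⁻¹).val : V →L[ℝ] V)‖)) μ

/-- `W` is `Γ_μ`-invariant (for a.e. `g`, `g W = W`). -/
def AEInv (μ : Measure (GLV V)) (W : Submodule ℝ V) : Prop :=
  ∀ᵐ g ∂μ, W.map ((g.val : V →L[ℝ] V) : V →ₗ[ℝ] V) = W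

/-- `(P, (ωₙ))` is an iid sequence of law `μ` on the Bernoulli space `(GLV V)^ℕ`. -/
def IsBernoulli (μ : Measure (GLV V)) (P : Measure (ℕ → GLV V)) : Prop :=
  iIndepFun (fun n (ω : ℕ → GLV V) => ω n) P ∧
    ∀ n, P.map (fun ω => ω n) = μ

/-- The projection `P(V) ∖ P(ker π) → P(Q)` induced by a surjection `π : V → Q`
(junk value on `P(ker π)`). -/
def projMapQ {Q : Type*} [NormedAddCommGroup Q] [NormedSpace ℝ Q] [Nontrivial Q]
    (π : V →ₗ[ℝ] Q) (x : Projectivization ℝ V) : Projectivization ℝ Q :=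
  if h : π x.rep ≠ 0 then Projectivization.mk ℝ (π x.rep) h
  else Projectivization.mk ℝ (Classical.choose (exists_ne (0 : Q)))
    (Classical.choose_spec (exists_ne (0 : Q)))

/-- The partially defined projection `P(V) ∖ P(U) → P(V/U)`, `Option`-valued. -/
def quotMapO (U : Submodule ℝ V) (x : Projectivization ℝ V) :
    Option (Projectivization ℝ (V ⧸ U)) :=
  if h : U.mkQ x.rep ≠ 0 then some (Projectivization.mk ℝ (U.mkQ x.rep) h) else none

/-- The linear span `F_ν` of the support of a measure `ν` on `P(V)`: the smallest
subspace whose projectivization has full measure. -/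
def spanOf (ν : Measure (Projectivization ℝ V)) : Submodule ℝ V :=
  sInf {U : Submodule ℝ V | ν (projSet U) = 1}

/-- The operator norm of the linear part of an affine self-map of `W`. -/
def affLinNorm {W : Type*} [NormedAddCommGroup W] [NormedSpace ℝ W]
    (T : W →ᵃ[ℝ] W) : ℝ :=
  sSup ((fun w => ‖T.linear w‖) '' Metric.closedBall (0 : W) 1)

/-! On the event `affLinNorm (T n ω) < δ / R`, the map `T n ω` sends the ball of radius `R`,
which carries almost all of `ν₁` and `ν₂`, into the `δ`-ball around `T n ω 0`; by uniform
continuity of `f` both integrals are then close to `f (T n ω 0)`. Off that event the integrand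
is bounded by `2 sup |f|`, and the event's complement has vanishing probability. -/

section AffLinNorm

variable {W : Type*} [NormedAddCommGroup W] [NormedSpace ℝ W] [FiniteDimensional ℝ W]

lemma affLinNorm_eq_opNorm (T : W →ᵃ[ℝ] W) :
    affLinNorm T = ‖LinearMap.toContinuousLinearMap T.linear‖ :=
  (LinearMap.toContinuousLinearMap T.linear).sSup_unitClosedBall_eq_norm

lemma affLinNorm_nonneg (T : W →ᵃ[ℝ] W) : 0 ≤ affLinNorm T := by
  rw [affLinNorm_eq_opNorm]
  exact norm_nonneg _

lemma dist_apply_le_affLinNorm_mul (T : W →ᵃ[ℝ] W) (x y : W) :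
    dist (T x) (T y) ≤ affLinNorm T * dist x y := by
  rw [dist_eq_norm, dist_eq_norm, ← vsub_eq_sub, ← T.linearMap_vsub, affLinNorm_eq_opNorm]
  exact (LinearMap.toContinuousLinearMap T.linear).le_opNorm (x -ᵥ y)

end AffLinNorm

section Integration

variable {α : Type*} [MeasurableSpace α] {μ : Measure α}

/-- No measurability of `X` is needed: if `X` is not integrable its integral is `0`. -/
lemma integral_le_mul_measureReal_add [IsFiniteMeasure μ] {X : α → ℝ} {B : Set α} {C η : ℝ}
    (hX : ∀ a, 0 ≤ X a) (hC : ∀ a, X a ≤ C) (hη0 : 0 ≤ η) (hη : ∀ a ∉ B, X a ≤ η) :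
    ∫ a, X a ∂μ ≤ C * μ.real B + η * μ.real Set.univ := by
  set B' := toMeasurable μ B
  have hB' : MeasurableSet B' := measurableSet_toMeasurable μ B
  have hle : ∀ a, X a ≤ B'.indicator (fun _ => C) a + η := by
    intro a
    by_cases ha : a ∈ B'
    · rw [Set.indicator_of_mem ha]
      linarith [hC a]
    · rw [Set.indicator_of_notMem ha, zero_add]
      exact hη a fun haB => ha (subset_toMeasurable μ B haB)
  calc ∫ a, X a ∂μ ≤ ∫ a, (B'.indicator (fun _ => C) a + η) ∂μ :=
        integral_mono_of_nonneg (ae_of_all _ hX)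
          (((integrable_const C).indicator hB').add (integrable_const η)) (ae_of_all _ hle)
    _ = C * μ.real B + η * μ.real Set.univ := by
        rw [integral_add ((integrable_const C).indicator hB') (integrable_const η),
          integral_indicator_const C hB', integral_const, smul_eq_mul, smul_eq_mul,
          measureReal_def, measure_toMeasurable, ← measureReal_def]
        ring

lemma abs_integral_sub_le_of_abs_sub_le_on [IsProbabilityMeasure μ] {g : α → ℝ}
    (hg : Integrable g μ) {c M η : ℝ} {K : Set α} (hM : ∀ a, |g a - c| ≤ M) (hη0 : 0 ≤ η)
    (hη : ∀ a ∈ K, |g a - c| ≤ η) :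
    |∫ a, g a ∂μ - c| ≤ M * μ.real Kᶜ + η := by
  have hsub : ∫ a, g a ∂μ - c = ∫ a, (g a - c) ∂μ := by
    rw [integral_sub hg (integrable_const c), integral_const, probReal_univ, one_smul]
  calc |∫ a, g a ∂μ - c| ≤ ∫ a, |g a - c| ∂μ := hsub ▸ abs_integral_le_integral_abs
    _ ≤ M * μ.real Kᶜ + η * μ.real Set.univ :=
        integral_le_mul_measureReal_add (fun a => abs_nonneg _) hM hη0
          (fun a ha => hη a (not_not.1 ha))
    _ = M * μ.real Kᶜ + η := by rw [probReal_univ, mul_one]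

lemma tendsto_integral_zero_of_le_of_le_off {ι : Type*} {l : Filter ι} [IsProbabilityMeasure μ]
    {X : ι → α → ℝ} {C : ℝ} (hX : ∀ i a, 0 ≤ X i a) (hC : ∀ i a, X i a ≤ C)
    (hsmall : ∀ ε > 0, ∃ B : ι → Set α,
      Tendsto (fun i => μ (B i)) l (𝓝 0) ∧ ∀ i, ∀ a ∉ B i, X i a ≤ ε) :
    Tendsto (fun i => ∫ a, X i a ∂μ) l (𝓝 0) := by
  refine tendsto_order.2 ⟨fun b hb => Eventually.of_forall fun i =>
    hb.trans_le (integral_nonneg (hX i)), fun b hb => ?_⟩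
  obtain ⟨B, hB, hXB⟩ := hsmall (b / 2) (half_pos hb)
  have hCB : Tendsto (fun i => C * μ.real (B i)) l (𝓝 0) := by
    simpa [measureReal_def] using ((ENNReal.tendsto_toReal ENNReal.zero_ne_top).comp hB).const_mul C
  filter_upwards [hCB.eventually_lt_const (half_pos hb)] with i hi
  calc ∫ a, X i a ∂μ ≤ C * μ.real (B i) + b / 2 * μ.real Set.univ :=
        integral_le_mul_measureReal_add (hX i) (hC i) (half_pos hb).le (hXB i)
    _ < b := by rw [probReal_univ, mul_one]; linarith

end Integration

section Washout

variable {W : Type*} [NormedAddCommGroup W] [NormedSpace ℝ W] [FiniteDimensional ℝ W]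
  [MeasurableSpace W] [BorelSpace W]

lemma exists_forall_affLinNorm_lt_abs_integral_comp_sub_le {f : W → ℝ} (hf : Continuous f)
    (hfc : HasCompactSupport f) (ν : Measure W) [IsProbabilityMeasure ν] {ε : ℝ} (hε : 0 < ε) :
    ∃ δ > 0, ∀ A : W →ᵃ[ℝ] W, affLinNorm A < δ → |∫ t, f (A t) ∂ν - f (A 0)| ≤ ε := by
  obtain ⟨M, hM⟩ := hfc.exists_bound_of_continuous hf
  obtain ⟨δ₀, hδ₀, hfδ₀⟩ :=
    Metric.uniformContinuous_iff.1 (hfc.uniformContinuous_of_continuous hf) (ε / 2) (half_pos hε)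
  have htail : Tendsto (fun r : ℝ => 2 * M * ν.real (closedBall (0 : W) r)ᶜ) atTop (𝓝 0) := by
    have hν := tendsto_measure_compl_closedBall_of_isTightMeasureSet
      (isTightMeasureSet_singleton (μ := ν)) (0 : W)
    simp only [Set.mem_singleton_iff, iSup_iSup_eq_left] at hν
    simpa [measureReal_def] using
      ((ENNReal.tendsto_toReal ENNReal.zero_ne_top).comp hν).const_mul (2 * M)
  obtain ⟨R, hR, hRtail⟩ :=
    ((eventually_gt_atTop 0).and (htail.eventually_lt_const (half_pos hε))).exists
  refine ⟨δ₀ / R, div_pos hδ₀ hR, fun A hA => ?_⟩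
  have hfA_bound : ∀ t, |f (A t) - f (A 0)| ≤ 2 * M := fun t => by
    have h₁ := hM (A t)
    have h₂ := hM (A 0)
    rw [Real.norm_eq_abs] at h₁ h₂
    linarith [abs_sub (f (A t)) (f (A 0))]
  have hfA_near : ∀ t ∈ closedBall (0 : W) R, |f (A t) - f (A 0)| ≤ ε / 2 := fun t ht => by
    have hdist : dist (A t) (A 0) < δ₀ :=
      calc dist (A t) (A 0) ≤ affLinNorm A * dist t 0 := dist_apply_le_affLinNorm_mul A t 0
        _ ≤ affLinNorm A * R := by
          gcongr
          exacts [affLinNorm_nonneg A, mem_closedBall.1 ht]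
        _ < δ₀ := (lt_div_iff₀ hR).1 hA
    exact (hfδ₀ hdist).le
  have hfA_int : Integrable (fun t => f (A t)) ν :=
    Integrable.of_bound (hf.comp A.continuous_of_finiteDimensional).aestronglyMeasurable M
      (ae_of_all _ fun t => hM (A t))
  calc |∫ t, f (A t) ∂ν - f (A 0)| ≤ 2 * M * ν.real (closedBall (0 : W) R)ᶜ + ε / 2 :=
        abs_integral_sub_le_of_abs_sub_le_on hfA_int hfA_bound (half_pos hε).le hfA_near
    _ ≤ ε := by linarith

end Washout

/-- Lemma 4.4, abstract form. If the linear parts of random affine maps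
T_n on W tend to 0 in probability, then for any two probability measures ν₁, ν₂ on W and
any f ∈ C_c(W), ∫ f(T_n t) dν₁(t) − ∫ f(T_n t) dν₂(t) → 0 in L¹. -/
theorem affine_contraction_in_probability_washes_out_initial_measure
    {W : Type*} [NormedAddCommGroup W] [NormedSpace ℝ W] [FiniteDimensional ℝ W]
    [MeasurableSpace W] [BorelSpace W]
    {Ω : Type*} [MeasurableSpace Ω] (P : Measure Ω) [IsProbabilityMeasure P]
    (T : ℕ → Ω → (W →ᵃ[ℝ] W))
    (hT : ∀ ε > (0:ℝ), Tendsto (fun n => P {ω | ε ≤ affLinNorm (T n ω)}) atTop (𝓝 0))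
    (ν₁ ν₂ : Measure W) [IsProbabilityMeasure ν₁] [IsProbabilityMeasure ν₂]
    (f : W → ℝ) (hf : Continuous f) (hfc : HasCompactSupport f) :
    Tendsto (fun n => ∫ ω, |(∫ t, f (T n ω t) ∂ν₁) - ∫ t, f (T n ω t) ∂ν₂| ∂P)
      atTop (𝓝 0) := by
  obtain ⟨M, hM⟩ := hfc.exists_bound_of_continuous hf
  have hbound : ∀ (ν : Measure W) [IsProbabilityMeasure ν] (A : W →ᵃ[ℝ] W),
      |∫ t, f (A t) ∂ν| ≤ M := fun ν _ A => by
    simpa using norm_integral_le_of_norm_le_const (μ := ν) (ae_of_all _ fun t => hM (A t))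
  have hdiff_bound : ∀ n ω, |(∫ t, f (T n ω t) ∂ν₁) - ∫ t, f (T n ω t) ∂ν₂| ≤ 2 * M :=
    fun n ω => by
      linarith [abs_sub (∫ t, f (T n ω t) ∂ν₁) (∫ t, f (T n ω t) ∂ν₂), hbound ν₁ (T n ω),
        hbound ν₂ (T n ω)]
  refine tendsto_integral_zero_of_le_of_le_off (fun _ _ => abs_nonneg _) hdiff_bound
    fun ε hε => ?_
  obtain ⟨δ₁, hδ₁, h₁⟩ :=
    exists_forall_affLinNorm_lt_abs_integral_comp_sub_le hf hfc ν₁ (half_pos hε)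
  obtain ⟨δ₂, hδ₂, h₂⟩ :=
    exists_forall_affLinNorm_lt_abs_integral_comp_sub_le hf hfc ν₂ (half_pos hε)
  refine ⟨fun n => {ω | min δ₁ δ₂ ≤ affLinNorm (T n ω)}, hT _ (lt_min hδ₁ hδ₂),
    fun n ω hω => ?_⟩
  simp only [Set.mem_setOf_eq, not_le, lt_min_iff] at hω
  calc |(∫ t, f (T n ω t) ∂ν₁) - ∫ t, f (T n ω t) ∂ν₂|
      ≤ |∫ t, f (T n ω t) ∂ν₁ - f (T n ω 0)| + |∫ t, f (T n ω t) ∂ν₂ - f (T n ω 0)| := by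
        rw [abs_sub_comm (∫ t, f (T n ω t) ∂ν₂)]
        exact abs_sub_le _ _ _
    _ ≤ ε / 2 + ε / 2 := add_le_add (h₁ _ hω.1) (h₂ _ hω.2)
    _ = ε := add_halves ε

end
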